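/- arXiv:cs/0502075 — 5 statements merged into one kernel-verified Lean document; each statement's English description precedes it below -/
import Mathlib

section
/- Let X ∈ ℝ^n with |x_j| ≤ M for all j, and let k ≥ 1 be real. If Z ∈ ℝ^n is at least as good as the all-zero synopsis, i.e., ‖X − W⁻¹(Z)‖_k ≤ ‖X‖_k, then every coordinate of the reconstruction is bounded: max_j |W⁻¹(Z)_j| ≤ 2·n^{1/k}·M. -/
/-- The non-normalized Haar basis vector `V_i` on `n = 2^m` coordinates:
`V_0 ≡ 1`, and for `i = 2^s + t` (`0 ≤ s < m`, `0 ≤ t < 2^s`), `V_i` is `+1` on the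
left half of the dyadic block `I(s,t) = [t·2^(m-s), (t+1)·2^(m-s))`, `-1` on its right
half, and `0` outside. -/
noncomputable def haarV (m i j : ℕ) : ℝ :=
  if i = 0 then 1
  else
    let s := Nat.log2 i
    let t := i - 2 ^ s
    if t * 2 ^ (m - s) ≤ j ∧ j < t * 2 ^ (m - s) + 2 ^ (m - s - 1) then 1
    else if t * 2 ^ (m - s) + 2 ^ (m - s - 1) ≤ j ∧ j < (t + 1) * 2 ^ (m - s) then -1
    else 0

/-- The inverse wavelet transform `W⁻¹(Z) = ∑_{i<2^m} Z_i · V_i`. -/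
noncomputable def invW (m : ℕ) (Z : ℕ → ℝ) (j : ℕ) : ℝ :=
  ∑ i ∈ Finset.range (2 ^ m), Z i * haarV m i j

/-- The `ℓ_k` norm `‖Y‖_k = (∑_{j<n} |Y_j|^k)^(1/k)` of a vector `Y ∈ ℝ^n`. -/
noncomputable def lpNormK (n : ℕ) (k : ℝ) (Y : ℕ → ℝ) : ℝ :=
  (∑ j ∈ Finset.range n, |Y j| ^ k) ^ (1 / k)

/-!
The reconstruction `W⁻¹(Z)` plays no special role: for any `Y` with `‖X - Y‖_k ≤ ‖X‖_k`,
the triangle inequality gives `|Y_j| ≤ |X_j| + |X_j - Y_j| ≤ M + ‖X - Y‖_k ≤ M + ‖X‖_k`,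
and `‖X‖_k ≤ n^(1/k) M` since every coordinate of `X` is at most `M` in absolute value.
-/

namespace lpNormK

variable {n : ℕ} {k : ℝ}

theorem abs_apply_le (hk : 0 < k) (Y : ℕ → ℝ) {j : ℕ} (hj : j < n) :
    |Y j| ≤ lpNormK n k Y := by
  calc |Y j| = (|Y j| ^ k) ^ (1 / k) := by
        rw [one_div, Real.rpow_rpow_inv (abs_nonneg _) hk.ne']
    _ ≤ lpNormK n k Y := by
        refine Real.rpow_le_rpow (by positivity) ?_ (by positivity)
        exact Finset.single_le_sum (f := fun i => |Y i| ^ k) (fun i _ => by positivity)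
          (Finset.mem_range.mpr hj)

theorem le_of_abs_le (hk : 0 < k) {Y : ℕ → ℝ} {M : ℝ} (hM : 0 ≤ M)
    (hY : ∀ j < n, |Y j| ≤ M) : lpNormK n k Y ≤ (n : ℝ) ^ (1 / k) * M := by
  have hsum : ∑ j ∈ Finset.range n, |Y j| ^ k ≤ n * M ^ k := by
    calc ∑ j ∈ Finset.range n, |Y j| ^ k ≤ ∑ _j ∈ Finset.range n, M ^ k :=
          Finset.sum_le_sum fun j hj =>
            Real.rpow_le_rpow (abs_nonneg _) (hY j (Finset.mem_range.mp hj)) hk.le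
      _ = n * M ^ k := by simp
  calc lpNormK n k Y ≤ (n * M ^ k) ^ (1 / k) :=
        Real.rpow_le_rpow (by positivity) hsum (by positivity)
    _ = (n : ℝ) ^ (1 / k) * M := by
        rw [Real.mul_rpow (by positivity) (by positivity), one_div,
          Real.rpow_rpow_inv hM hk.ne']

theorem abs_apply_le_of_sub_le (hk : 0 < k) {X Y : ℕ → ℝ} {M : ℝ}
    (hX : ∀ j < n, |X j| ≤ M) (hXY : lpNormK n k (fun j => X j - Y j) ≤ lpNormK n k X)
    {j : ℕ} (hj : j < n) : |Y j| ≤ 2 * (n : ℝ) ^ (1 / k) * M := by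
  have hM : 0 ≤ M := (abs_nonneg _).trans (hX j hj)
  have hn : (1 : ℝ) ≤ (n : ℝ) ^ (1 / k) :=
    Real.one_le_rpow (by exact_mod_cast Nat.one_le_of_lt hj) (by positivity)
  calc |Y j| ≤ |X j| + |X j - Y j| := by
        simpa using abs_sub (X j) (X j - Y j)
    _ ≤ (n : ℝ) ^ (1 / k) * M + (n : ℝ) ^ (1 / k) * M := by
        gcongr
        · exact (hX j hj).trans (le_mul_of_one_le_left hM hn)
        · exact (abs_apply_le hk (fun j => X j - Y j) hj).trans
            (hXY.trans (le_of_abs_le hk hM hX))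
    _ = 2 * (n : ℝ) ^ (1 / k) * M := by ring

end lpNormK

theorem reconstruction_coord_bound_general (m : ℕ) (X Z : ℕ → ℝ) (M k : ℝ)
    (hk : 1 ≤ k) (hX : ∀ j < 2 ^ m, |X j| ≤ M)
    (hZ : lpNormK (2 ^ m) k (fun j => X j - invW m Z j) ≤ lpNormK (2 ^ m) k X) :
    ∀ j < 2 ^ m, |invW m Z j| ≤ 2 * ((2 ^ m : ℕ) : ℝ) ^ (1 / k) * M :=
  fun _ hj => lpNormK.abs_apply_le_of_sub_le (by linarith) hX hZ hj

/-- if `|x_j| ≤ M` for all `j`, `k ≥ 1`, and `Z` is at least as good as the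
all-zero synopsis, i.e. `‖X − W⁻¹(Z)‖_k ≤ ‖X‖_k`, then every coordinate of the
reconstruction is bounded: `|W⁻¹(Z)_j| ≤ 2·n^(1/k)·M`. -/
theorem reconstruction_coord_bound (m : ℕ) (hm : 1 ≤ m) (X Z : ℕ → ℝ) (M k : ℝ)
    (hk : 1 ≤ k) (hX : ∀ j < 2 ^ m, |X j| ≤ M)
    (hZ : lpNormK (2 ^ m) k (fun j => X j - invW m Z j) ≤ lpNormK (2 ^ m) k X) :
    ∀ j < 2 ^ m, |invW m Z j| ≤ 2 * ((2 ^ m : ℕ) : ℝ) ^ (1 / k) * M :=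
  reconstruction_coord_bound_general m X Z M k hk hX hZ
end

section
/- Let X ∈ ℝ^n with |x_j| ≤ M for all j, and let k ≥ 1 be real. If Z ∈ ℝ^n satisfies ‖X − W⁻¹(Z)‖_k ≤ ‖X‖_k (in particular, if Z minimizes ‖X − W⁻¹(Z)‖_k over all vectors with at most B nonzero entries, for any B), then max_i |Z_i| ≤ 2·n^{1/k}·M. -/
lemma haarV_succ_of_lt {m i : ℕ} (hi : i < 2 ^ m) (j : ℕ) :
    haarV (m + 1) i j = haarV m i (j / 2) := by
  unfold haarV
  by_cases h0 : i = 0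
  · simp only [h0, if_true]
  simp only [h0, if_false]
  have hs : Nat.log2 i < m := (Nat.log2_lt h0).mpr hi
  set s := Nat.log2 i
  set t := i - 2 ^ s
  set P := 2 ^ (m - s - 1)
  have hfine : 2 ^ (m + 1 - s) = 4 * P := by
    rw [show m + 1 - s = m - s - 1 + 2 by omega, pow_add]; ring
  have hhalf : 2 ^ (m + 1 - s - 1) = 2 * P := by
    rw [show m + 1 - s - 1 = m - s - 1 + 1 by omega, pow_succ]; ring
  have hcoarse : 2 ^ (m - s) = 2 * P := by
    rw [show m - s = m - s - 1 + 1 by omega, pow_succ]; ring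
  rw [hfine, hhalf, hcoarse, show t * (4 * P) = 4 * (t * P) by ring,
    show t * (2 * P) = 2 * (t * P) by ring, show (t + 1) * (4 * P) = 4 * (t * P) + 4 * P by ring,
    show (t + 1) * (2 * P) = 2 * (t * P) + 2 * P by ring]
  split_ifs <;> first | rfl | omega

lemma log2_two_pow_add {m t : ℕ} (ht : t < 2 ^ m) : Nat.log2 (2 ^ m + t) = m := by
  have hne : 2 ^ m + t ≠ 0 := by positivity
  refine le_antisymm (Nat.lt_succ_iff.mp ((Nat.log2_lt hne).mpr ?_)) ((Nat.le_log2 hne).mpr ?_)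
  · rw [pow_succ]; omega
  · omega

lemma haarV_succ_two_pow_add {m t : ℕ} (ht : t < 2 ^ m) (j : ℕ) :
    haarV (m + 1) (2 ^ m + t) (2 * j) = (if j = t then 1 else 0) ∧
    haarV (m + 1) (2 ^ m + t) (2 * j + 1) = (if j = t then -1 else 0) := by
  unfold haarV
  simp only [show 2 ^ m + t ≠ 0 by positivity, if_false, log2_two_pow_add ht,
    Nat.add_sub_cancel_left, Nat.sub_self, pow_one, pow_zero]
  constructor <;> split_ifs <;> first | rfl | omega

lemma invW_succ (m : ℕ) (Z : ℕ → ℝ) {j : ℕ} (hj : j < 2 ^ m) :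
    invW (m + 1) Z (2 * j) = invW m Z j + Z (2 ^ m + j) ∧
    invW (m + 1) Z (2 * j + 1) = invW m Z j - Z (2 ^ m + j) := by
  have hsplit (l : ℕ) : invW (m + 1) Z l = invW m Z (l / 2)
      + ∑ t ∈ Finset.range (2 ^ m), Z (2 ^ m + t) * haarV (m + 1) (2 ^ m + t) l := by
    rw [invW, invW, pow_succ, mul_two, Finset.sum_range_add]
    congr 1
    exact Finset.sum_congr rfl fun i hi => by rw [haarV_succ_of_lt (Finset.mem_range.mp hi)]
  have hj' := Finset.mem_range.mpr hj
  constructor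
  · rw [hsplit, show 2 * j / 2 = j by omega,
      Finset.sum_eq_single_of_mem j hj' fun t ht htj => by
        rw [(haarV_succ_two_pow_add (Finset.mem_range.mp ht) j).1, if_neg (Ne.symm htj), mul_zero],
      (haarV_succ_two_pow_add hj j).1, if_pos rfl, mul_one]
  · rw [hsplit, show (2 * j + 1) / 2 = j by omega,
      Finset.sum_eq_single_of_mem j hj' fun t ht htj => by
        rw [(haarV_succ_two_pow_add (Finset.mem_range.mp ht) j).2, if_neg (Ne.symm htj), mul_zero],
      (haarV_succ_two_pow_add hj j).2, if_pos rfl, mul_neg_one, sub_eq_add_neg]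

lemma abs_le_of_abs_add_le_of_abs_sub_le {a b C : ℝ} (hadd : |a + b| ≤ C)
    (hsub : |a - b| ≤ C) : |a| ≤ C ∧ |b| ≤ C := by
  rw [abs_le] at hadd hsub ⊢
  rw [abs_le]
  exact ⟨⟨by linarith, by linarith⟩, ⟨by linarith, by linarith⟩⟩

theorem abs_coeff_le_of_abs_invW_le {m : ℕ} {Z : ℕ → ℝ} {C : ℝ}
    (h : ∀ j < 2 ^ m, |invW m Z j| ≤ C) : ∀ i < 2 ^ m, |Z i| ≤ C := by
  induction m generalizing Z with
  | zero =>
    intro i hi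
    obtain rfl : i = 0 := by omega
    simpa [invW, haarV] using h 0 one_pos
  | succ m ih =>
    have hhalves (j : ℕ) (hj : j < 2 ^ m) : |invW m Z j| ≤ C ∧ |Z (2 ^ m + j)| ≤ C := by
      obtain ⟨heven, hodd⟩ := invW_succ m Z hj
      refine abs_le_of_abs_add_le_of_abs_sub_le ?_ ?_
      · rw [← heven]; exact h _ (by rw [pow_succ]; omega)
      · rw [← hodd]; exact h _ (by rw [pow_succ]; omega)
    intro i hi
    by_cases hlo : i < 2 ^ m
    · exact ih (fun j hj => (hhalves j hj).1) i hlo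
    · obtain ⟨t, rfl⟩ := Nat.exists_eq_add_of_le (not_lt.mp hlo)
      exact (hhalves t (by rw [pow_succ] at hi; omega)).2

lemma abs_le_lpNormK {n : ℕ} {k : ℝ} (hk : 0 < k) (Y : ℕ → ℝ) {j : ℕ} (hj : j < n) :
    |Y j| ≤ lpNormK n k Y := by
  calc |Y j| = (|Y j| ^ k) ^ (1 / k) := by
        rw [← Real.rpow_mul (abs_nonneg _), mul_one_div_cancel hk.ne', Real.rpow_one]
    _ ≤ lpNormK n k Y := by
      refine Real.rpow_le_rpow (by positivity) ?_ (by positivity)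
      exact Finset.single_le_sum (f := fun i => |Y i| ^ k) (fun i _ => by positivity)
        (Finset.mem_range.mpr hj)

lemma lpNormK_le_of_abs_le {n : ℕ} {k : ℝ} (hk : 0 < k) {X : ℕ → ℝ} {M : ℝ}
    (hM : 0 ≤ M) (hX : ∀ j < n, |X j| ≤ M) : lpNormK n k X ≤ (n : ℝ) ^ (1 / k) * M := by
  calc lpNormK n k X ≤ (∑ _j ∈ Finset.range n, M ^ k) ^ (1 / k) := by
        refine Real.rpow_le_rpow (by positivity) (Finset.sum_le_sum fun j hj => ?_) (by positivity)
        exact Real.rpow_le_rpow (abs_nonneg _) (hX j (Finset.mem_range.mp hj)) hk.le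
    _ = (n : ℝ) ^ (1 / k) * M := by
      rw [Finset.sum_const, Finset.card_range, nsmul_eq_mul,
        Real.mul_rpow (by positivity) (by positivity), ← Real.rpow_mul hM,
        mul_one_div_cancel hk.ne', Real.rpow_one]

theorem synopsis_coeff_bound_general (m : ℕ) (X Z : ℕ → ℝ) (M k : ℝ)
    (hk : 1 ≤ k) (hX : ∀ j < 2 ^ m, |X j| ≤ M)
    (hZ : lpNormK (2 ^ m) k (fun j => X j - invW m Z j) ≤ lpNormK (2 ^ m) k X) :
    ∀ i < 2 ^ m, |Z i| ≤ 2 * ((2 ^ m : ℕ) : ℝ) ^ (1 / k) * M := by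
  have hk0 : 0 < k := by linarith
  have hM : 0 ≤ M := (abs_nonneg _).trans (hX 0 (Nat.two_pow_pos m))
  set N := ((2 ^ m : ℕ) : ℝ) ^ (1 / k)
  have hN : 1 ≤ N := Real.one_le_rpow (by exact_mod_cast Nat.one_le_two_pow) (by positivity)
  have hMN : M ≤ N * M := le_mul_of_one_le_left hM hN
  refine abs_coeff_le_of_abs_invW_le fun j hj => ?_
  have hres : |X j - invW m Z j| ≤ N * M :=
    (abs_le_lpNormK hk0 _ hj).trans (hZ.trans (lpNormK_le_of_abs_le hk0 hM hX))
  calc |invW m Z j| = |X j - (X j - invW m Z j)| := by rw [sub_sub_cancel]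
    _ ≤ |X j| + |X j - invW m Z j| := abs_sub _ _
    _ ≤ 2 * N * M := by linarith [hX j hj]

/-- if `|x_j| ≤ M` for all `j`, `k ≥ 1`, and `Z` satisfies
`‖X − W⁻¹(Z)‖_k ≤ ‖X‖_k` (as any minimizer over vectors with at most `B` nonzero
entries does), then the synopsis coefficients themselves are bounded:
`|Z_i| ≤ 2·n^(1/k)·M` for every `i < n = 2^m`. -/
theorem synopsis_coeff_bound (m : ℕ) (hm : 1 ≤ m) (X Z : ℕ → ℝ) (M k : ℝ)
    (hk : 1 ≤ k) (hX : ∀ j < 2 ^ m, |X j| ≤ M)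
    (hZ : lpNormK (2 ^ m) k (fun j => X j - invW m Z j) ≤ lpNormK (2 ^ m) k X) :
    ∀ i < 2 ^ m, |Z i| ≤ 2 * ((2 ^ m : ℕ) : ℝ) ^ (1 / k) * M :=
  synopsis_coeff_bound_general m X Z M k hk hX hZ
end

section
/- Let X ∈ ℝ^n with |x_j| ≤ M for all j, let k ≥ 1 be real, and let π_0,…,π_{n−1} > 0 be weights with ∑_j π_j = n. If Z ∈ ℝ^n satisfies ‖X − W⁻¹(Z)‖_{π,k} ≤ ‖X‖_{π,k} (in particular, if Z minimizes the weighted error over all vectors with at most B nonzero entries), then max_i |Z_i| ≤ 2·n^{1/k}·M / (min_j π_j). -/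
/-- The weighted `ℓ_k` norm `‖Y‖_{w,k} = (∑_{j<n} w_j·|Y_j|^k)^(1/k)`. -/
noncomputable def wLpNormK (n : ℕ) (w : ℕ → ℝ) (k : ℝ) (Y : ℕ → ℝ) : ℝ :=
  (∑ j ∈ Finset.range n, w j * |Y j| ^ k) ^ (1 / k)

open Finset

theorem Finset.sum_range_mul_eq_sum_sum {M : Type*} [AddCommMonoid M] (f : ℕ → M) (a b : ℕ) :
    ∑ j ∈ range (a * b), f j = ∑ u ∈ range a, ∑ r ∈ range b, f (u * b + r) := by
  induction a with
  | zero => simp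
  | succ a ih => rw [Nat.succ_mul, sum_range_add, ih, sum_range_succ]

theorem Nat.div_mul_div_of_dvd {e D : ℕ} (h : e ∣ D) (j : ℕ) : j / e * e / D = j / D := by
  obtain ⟨c, rfl⟩ := h
  rcases Nat.eq_zero_or_pos e with rfl | he
  · simp
  rw [← Nat.div_div_eq_div_mul, Nat.mul_div_cancel _ he, Nat.div_div_eq_div_mul]

theorem Nat.exists_eq_two_pow_add {i m : ℕ} (hi : i ≠ 0) (him : i < 2 ^ m) :
    ∃ s t, s < m ∧ t < 2 ^ s ∧ i = 2 ^ s + t := by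
  have hlow := Nat.pow_log_le_self 2 hi
  have hup : i < 2 ^ Nat.log 2 i * 2 := pow_succ 2 (Nat.log 2 i) ▸ Nat.lt_pow_succ_log_self one_lt_two i
  exact ⟨Nat.log 2 i, i - 2 ^ Nat.log 2 i, Nat.log_lt_of_lt_pow hi him, by omega, by omega⟩

section Haar

variable {m : ℕ}

theorem haarV_two_pow_add {s t : ℕ} (hs : s < m) (ht : t < 2 ^ s) (j : ℕ) :
    haarV m (2 ^ s + t) j =
      if j / 2 ^ (m - s - 1) / 2 = t then (-1) ^ (j / 2 ^ (m - s - 1)) else 0 := by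
  have hlog : Nat.log2 (2 ^ s + t) = s := by
    rw [Nat.log2_eq_log_two]
    exact Nat.log_eq_of_pow_le_of_lt_pow (by omega) (by rw [pow_succ]; omega)
  have hL : 2 ^ (m - s) = 2 ^ (m - s - 1) * 2 := by rw [← pow_succ]; congr 1; omega
  have hd : 0 < 2 ^ (m - s - 1) := by positivity
  simp only [haarV, hlog, Nat.add_sub_cancel_left, hL, add_eq_zero, pow_eq_zero_iff',
    OfNat.ofNat_ne_zero, ne_eq, false_and, if_false]
  generalize 2 ^ (m - s - 1) = d at hd ⊢
  have h_left : t * (d * 2) ≤ j ∧ j < t * (d * 2) + d ↔ j / d = 2 * t := by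
    rw [Nat.div_eq_iff hd, show 2 * t * d = t * (d * 2) by ring]; omega
  have h_right : t * (d * 2) + d ≤ j ∧ j < (t + 1) * (d * 2) ↔ j / d = 2 * t + 1 := by
    rw [Nat.div_eq_iff hd, show (2 * t + 1) * d = t * (d * 2) + d by ring,
      show (t + 1) * (d * 2) = t * (d * 2) + d + d by ring]; omega
  simp only [h_left, h_right]
  split_ifs <;> simp_all [pow_succ, pow_mul] <;> omega

theorem haarV_div_mul {s i : ℕ} (hsm : s ≤ m) (hi : i < 2 ^ s) (j : ℕ) :
    haarV m i (j / 2 ^ (m - s) * 2 ^ (m - s)) = haarV m i j := by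
  rcases eq_or_ne i 0 with rfl | hi0
  · simp [haarV]
  obtain ⟨s', t, hs', ht, rfl⟩ := Nat.exists_eq_two_pow_add hi0 hi
  rw [haarV_two_pow_add (by omega) ht, haarV_two_pow_add (by omega) ht,
    Nat.div_mul_div_of_dvd (pow_dvd_pow 2 (by omega))]

theorem sum_mul_haarV_two_pow_add {s t : ℕ} (hs : s < m) (ht : t < 2 ^ s) (G : ℕ → ℝ) :
    ∑ j ∈ range (2 ^ m), G (j / 2 ^ (m - s)) * haarV m (2 ^ s + t) j = 0 := by
  have hL : 2 ^ (m - s) = 2 ^ (m - s - 1) * 2 := by rw [← pow_succ]; congr 1; omega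
  have hn : 2 ^ m = 2 ^ s * 2 * 2 ^ (m - s - 1) := by
    rw [mul_assoc, mul_comm 2, ← hL, ← pow_add]; congr 1; omega
  have hd : 0 < 2 ^ (m - s - 1) := by positivity
  simp only [haarV_two_pow_add hs ht, hL, ← Nat.div_div_eq_div_mul]
  rw [hn, sum_range_mul_eq_sum_sum, sum_range_mul_eq_sum_sum]
  generalize 2 ^ (m - s - 1) = d at hd ⊢
  refine sum_eq_zero fun u _ => ?_
  have hq : ∀ q r, r ∈ range d → (q * d + r) / d = q := fun q r hr => by
    rw [Nat.add_comm, Nat.add_mul_div_right _ _ hd, Nat.div_eq_of_lt (mem_range.mp hr), zero_add]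
  simp +contextual only [hq, sum_range_succ, sum_range_zero]
  have h0 : (u * 2 + 0) / 2 = u := by omega
  have h1 : (u * 2 + 1) / 2 = u := by omega
  simp only [h0, h1, sum_const, card_range]
  split_ifs <;> simp [pow_succ, pow_mul]

theorem sum_haarV_mul_haarV_of_ne {i i' : ℕ} (hi : i < 2 ^ m) (hi' : i' < 2 ^ m) (hne : i ≠ i') :
    ∑ j ∈ range (2 ^ m), haarV m i j * haarV m i' j = 0 := by
  wlog hlt : i < i' generalizing i i'
  · simp_rw [mul_comm (haarV m i _)]
    exact this hi' hi hne.symm (by omega)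
  obtain ⟨s, t, hs, ht, rfl⟩ := Nat.exists_eq_two_pow_add (by omega) hi'
  by_cases hcoarse : i < 2 ^ s
  · simpa only [haarV_div_mul hs.le hcoarse] using
      sum_mul_haarV_two_pow_add hs ht fun u => haarV m i (u * 2 ^ (m - s))
  · obtain ⟨t', rfl⟩ : ∃ t', i = 2 ^ s + t' := ⟨i - 2 ^ s, by omega⟩
    refine sum_eq_zero fun j _ => ?_
    rw [haarV_two_pow_add hs (by omega), haarV_two_pow_add hs ht]
    split_ifs <;> first | omega | simp

theorem abs_haarV (i j : ℕ) : |haarV m i j| = haarV m i j ^ 2 := by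
  simp only [haarV]
  split_ifs <;> norm_num

theorem sum_haarV_sq_pos {i : ℕ} (hi : i < 2 ^ m) :
    0 < ∑ j ∈ range (2 ^ m), haarV m i j ^ 2 := by
  rcases eq_or_ne i 0 with rfl | hi0
  · exact sum_pos (fun _ _ => by simp [haarV]) (nonempty_range_iff.mpr (by positivity))
  obtain ⟨s, t, hs, ht, rfl⟩ := Nat.exists_eq_two_pow_add hi0 hi
  have hd : 0 < 2 ^ (m - s - 1) := by positivity
  refine sum_pos' (fun _ _ => sq_nonneg _) ⟨2 * t * 2 ^ (m - s - 1), mem_range.mpr ?_, ?_⟩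
  · calc 2 * t * 2 ^ (m - s - 1) < 2 * 2 ^ s * 2 ^ (m - s - 1) := by gcongr
      _ = 2 ^ m := by rw [mul_comm 2, ← pow_succ, ← pow_add]; congr 1; omega
  · rw [haarV_two_pow_add hs ht, Nat.mul_div_cancel _ hd]
    simp [pow_mul]

theorem sum_invW_mul_haarV (Z : ℕ → ℝ) {i : ℕ} (hi : i < 2 ^ m) :
    ∑ j ∈ range (2 ^ m), invW m Z j * haarV m i j =
      Z i * ∑ j ∈ range (2 ^ m), haarV m i j ^ 2 := by
  calc ∑ j ∈ range (2 ^ m), invW m Z j * haarV m i j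
      = ∑ i' ∈ range (2 ^ m), Z i' * ∑ j ∈ range (2 ^ m), haarV m i' j * haarV m i j := by
        simp_rw [invW, sum_mul, mul_sum, mul_assoc]
        exact sum_comm
    _ = Z i * ∑ j ∈ range (2 ^ m), haarV m i j * haarV m i j :=
        sum_eq_single i
          (fun i' hi' hne => by rw [sum_haarV_mul_haarV_of_ne (mem_range.mp hi') hi hne, mul_zero])
          (fun h => absurd (mem_range.mpr hi) h)
    _ = Z i * ∑ j ∈ range (2 ^ m), haarV m i j ^ 2 := by simp_rw [sq]

theorem abs_le_of_forall_abs_invW_le {Z : ℕ → ℝ} {C : ℝ} (hC : ∀ j < 2 ^ m, |invW m Z j| ≤ C)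
    {i : ℕ} (hi : i < 2 ^ m) : |Z i| ≤ C := by
  have hN := sum_haarV_sq_pos hi
  refine le_of_mul_le_mul_right ?_ hN
  calc |Z i| * ∑ j ∈ range (2 ^ m), haarV m i j ^ 2
      = |∑ j ∈ range (2 ^ m), invW m Z j * haarV m i j| := by
        rw [sum_invW_mul_haarV Z hi, abs_mul, abs_of_pos hN]
    _ ≤ ∑ j ∈ range (2 ^ m), |invW m Z j| * haarV m i j ^ 2 := by
        simpa only [abs_mul, abs_haarV] using abs_sum_le_sum_abs (fun j => invW m Z j * haarV m i j) (range (2 ^ m))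
    _ ≤ ∑ j ∈ range (2 ^ m), C * haarV m i j ^ 2 :=
        sum_le_sum fun j hj => by gcongr; exact hC j (mem_range.mp hj)
    _ = C * ∑ j ∈ range (2 ^ m), haarV m i j ^ 2 := (mul_sum _ _ _).symm

end Haar

section WeightedNorm

variable {n : ℕ} {w : ℕ → ℝ} {k : ℝ}

theorem rpow_mul_abs_le_wLpNormK (hk : 0 < k) (hw : ∀ j < n, 0 ≤ w j) (Y : ℕ → ℝ) {j : ℕ}
    (hj : j < n) : w j ^ (1 / k) * |Y j| ≤ wLpNormK n w k Y := by
  have hterm : ∀ i ∈ range n, 0 ≤ w i * |Y i| ^ k := fun i hi =>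
    mul_nonneg (hw i (mem_range.mp hi)) (by positivity)
  calc w j ^ (1 / k) * |Y j| = (w j * |Y j| ^ k) ^ (1 / k) := by
        rw [Real.mul_rpow (hw j hj) (by positivity), ← Real.rpow_mul (abs_nonneg _),
          mul_one_div_cancel hk.ne', Real.rpow_one]
    _ ≤ wLpNormK n w k Y :=
        Real.rpow_le_rpow (hterm j (mem_range.mpr hj))
          (single_le_sum hterm (mem_range.mpr hj)) (by positivity)

theorem wLpNormK_le_of_abs_le (hk : 0 < k) (hw : ∀ j < n, 0 ≤ w j) {Y : ℕ → ℝ} {M : ℝ}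
    (hM : 0 ≤ M) (hY : ∀ j < n, |Y j| ≤ M) :
    wLpNormK n w k Y ≤ (∑ j ∈ range n, w j) ^ (1 / k) * M := by
  calc wLpNormK n w k Y ≤ (∑ j ∈ range n, w j * M ^ k) ^ (1 / k) := by
        refine Real.rpow_le_rpow (sum_nonneg fun j hj => ?_) (sum_le_sum fun j hj => ?_)
          (by positivity)
        · exact mul_nonneg (hw j (mem_range.mp hj)) (by positivity)
        · exact mul_le_mul_of_nonneg_left
            (Real.rpow_le_rpow (abs_nonneg _) (hY j (mem_range.mp hj)) hk.le)
            (hw j (mem_range.mp hj))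
    _ = (∑ j ∈ range n, w j) ^ (1 / k) * M := by
        rw [← sum_mul, Real.mul_rpow (sum_nonneg fun j hj => hw j (mem_range.mp hj))
          (by positivity), ← Real.rpow_mul hM, mul_one_div_cancel hk.ne', Real.rpow_one]

theorem abs_le_of_wLpNormK_le (hk : 1 ≤ k) {c A : ℝ} (hc : 0 < c) (hc1 : c ≤ 1)
    (hw : ∀ j < n, c ≤ w j) {Y : ℕ → ℝ} (hY : wLpNormK n w k Y ≤ A) {j : ℕ} (hj : j < n) :
    |Y j| ≤ A / c := by
  have hk0 : 0 < k := one_pos.trans_le hk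
  rw [le_div_iff₀ hc]
  calc |Y j| * c ≤ c ^ (1 / k) * |Y j| := by
        rw [mul_comm]
        gcongr
        calc c = c ^ (1 : ℝ) := (Real.rpow_one c).symm
          _ ≤ c ^ (1 / k) := Real.rpow_le_rpow_of_exponent_ge hc hc1 (by
            rw [div_le_one hk0]; exact hk)
    _ ≤ w j ^ (1 / k) * |Y j| := by gcongr; exact hw j hj
    _ ≤ wLpNormK n w k Y :=
        rpow_mul_abs_le_wLpNormK hk0 (fun i hi => hc.le.trans (hw i hi)) Y hj
    _ ≤ A := hY

end WeightedNorm

/-- with weights `w_j > 0`, `∑_{j<n} w_j = n`, data bounded by `M`, and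
`k ≥ 1`: if `Z` satisfies `‖X − W⁻¹(Z)‖_{w,k} ≤ ‖X‖_{w,k}` (as any minimizer over
vectors with at most `B` nonzero entries does), then
`|Z_i| ≤ 2·n^(1/k)·M / (min_j w_j)` for every `i < n = 2^m`. -/
theorem weighted_synopsis_coeff_bound (m : ℕ) (X Z w : ℕ → ℝ) (M k : ℝ)
    (hk : 1 ≤ k) (hw : ∀ j < 2 ^ m, 0 < w j)
    (hwsum : ∑ j ∈ Finset.range (2 ^ m), w j = (2 ^ m : ℕ))
    (hX : ∀ j < 2 ^ m, |X j| ≤ M)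
    (hZ : wLpNormK (2 ^ m) w k (fun j => X j - invW m Z j) ≤ wLpNormK (2 ^ m) w k X) :
    ∀ i < 2 ^ m, |Z i| ≤ 2 * ((2 ^ m : ℕ) : ℝ) ^ (1 / k) * M /
      ((Finset.range (2 ^ m)).inf'
        (Finset.nonempty_range_iff.mpr (by positivity)) w) := by
  intro i hi
  have hne : (range (2 ^ m)).Nonempty := nonempty_range_iff.mpr (by positivity)
  set wmin := (range (2 ^ m)).inf' hne w
  have hk0 : 0 < k := one_pos.trans_le hk
  have hwmin : ∀ j < 2 ^ m, wmin ≤ w j := fun j hj => inf'_le w (mem_range.mpr hj)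
  have hwmin_pos : 0 < wmin := (lt_inf'_iff _).mpr fun j hj => hw j (mem_range.mp hj)
  have hwmin_le_one : wmin ≤ 1 := by
    obtain ⟨j, hj, hwj⟩ := exists_le_of_sum_le hne
      (f := w) (g := fun _ => 1) (by simp [hwsum])
    exact (hwmin j (mem_range.mp hj)).trans hwj
  have hM : 0 ≤ M := (abs_nonneg _).trans (hX 0 (by positivity))
  set B := ((2 ^ m : ℕ) : ℝ) ^ (1 / k) * M / wmin
  have hMB : M ≤ B := by
    have h1 : 1 ≤ ((2 ^ m : ℕ) : ℝ) ^ (1 / k) :=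
      Real.one_le_rpow (by exact_mod_cast Nat.one_le_two_pow) (by positivity)
    exact (le_mul_of_one_le_left hM h1).trans (le_div_self (mul_nonneg (by positivity) hM) hwmin_pos hwmin_le_one)
  have hXB : ∀ j < 2 ^ m, |X j - invW m Z j| ≤ B := fun j hj => by
    refine abs_le_of_wLpNormK_le hk hwmin_pos hwmin_le_one hwmin (hZ.trans ?_) hj
    simpa only [hwsum] using wLpNormK_le_of_abs_le hk0 (fun j hj => (hw j hj).le) hM hX
  refine abs_le_of_forall_abs_invW_le (fun j hj => ?_) hi
  calc |invW m Z j| = |X j - (X j - invW m Z j)| := by rw [sub_sub_cancel]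
    _ ≤ |X j| + |X j - invW m Z j| := abs_sub _ _
    _ ≤ B + B := add_le_add ((hX j hj).trans hMB) (hXB j hj)
    _ = 2 * ((2 ^ m : ℕ) : ℝ) ^ (1 / k) * M / wmin := by ring
end

section
/- Let m ≥ b ≥ 1 be integers, n = 2^m and B = 2^b. Then the sum bounding the running time of the improved restricted-wavelet dynamic program satisfies ∑_{t=1}^{m} (n/2^t) · (2n/2^t) · min(B², 4^t) ≤ 2·n²·log₂ B + n². -/
/-!
For `t ≤ m` the `t`-th summand equals `2 · min (4^(m-t+b)) (4^m)`. Reindexing by `s = m - t`,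
the at most `b` summands with `s ≥ m - b` are capped at `2 · 4^m`, while the remaining ones are
twice distinct powers `4^j` with `j < m`, whose geometric sum is at most `4^m / 2`.
-/

open Finset

lemma sum_Icc_one_comp_sub {M : Type*} [AddCommMonoid M] (f : ℕ → M) (m : ℕ) :
    ∑ t ∈ Icc 1 m, f (m - t) = ∑ s ∈ range m, f s := by
  rw [← Ico_add_one_right_eq_Icc, sum_Ico_eq_sum_range, ← sum_range_reflect f]
  refine sum_congr rfl fun s _ => ?_
  congr 1
  omega

lemma two_mul_geomSum_four_le (k : ℕ) : 2 * ∑ i ∈ range k, 4 ^ i ≤ 4 ^ k := by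
  have := Nat.one_le_pow k 4 (by norm_num)
  rw [Nat.geomSum_eq (by norm_num)]
  omega

lemma sq_two_pow (k : ℕ) : (2 ^ k) ^ 2 = 4 ^ k := by
  rw [← pow_mul, pow_mul']
  norm_num

lemma level_work_eq {m t : ℕ} (b : ℕ) (ht : t ≤ m) :
    (2 ^ m / 2 ^ t) * (2 * 2 ^ m / 2 ^ t) * min ((2 ^ b) ^ 2) (4 ^ t)
      = 2 * min (4 ^ (m - t + b)) (4 ^ m) := by
  have hdiv : 2 ^ m / 2 ^ t = 2 ^ (m - t) := Nat.pow_div ht two_pos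
  have hdiv' : 2 * 2 ^ m / 2 ^ t = 2 * 2 ^ (m - t) := by
    rw [Nat.mul_div_assoc _ (Nat.pow_dvd_pow 2 ht), hdiv]
  rw [hdiv, hdiv']
  calc 2 ^ (m - t) * (2 * 2 ^ (m - t)) * min ((2 ^ b) ^ 2) (4 ^ t)
      = 2 * min (4 ^ (m - t) * 4 ^ b) (4 ^ (m - t) * 4 ^ t) := by
        rw [Nat.mul_min_mul_left, sq_two_pow, ← sq_two_pow (m - t)]; ring
    _ = 2 * min (4 ^ (m - t + b)) (4 ^ m) := by rw [← pow_add, ← pow_add, Nat.sub_add_cancel ht]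

lemma two_mul_sum_range_min_pow_four_le (m b : ℕ) :
    2 * ∑ s ∈ range m, min (4 ^ (s + b)) (4 ^ m) ≤ 2 * b * 4 ^ m + 4 ^ m := by
  rw [← sum_range_add_sum_Ico _ (Nat.sub_le m b), mul_add]
  have low : 2 * ∑ s ∈ range (m - b), min (4 ^ (s + b)) (4 ^ m) ≤ 4 ^ m := by
    calc 2 * ∑ s ∈ range (m - b), min (4 ^ (s + b)) (4 ^ m)
        ≤ 2 * ∑ j ∈ Ico b m, 4 ^ j := by
          rw [sum_Ico_eq_sum_range]
          gcongr with s
          rw [add_comm]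
          exact min_le_left _ _
      _ ≤ 2 * ∑ j ∈ range m, 4 ^ j := by
          rw [range_eq_Ico]
          gcongr
          exact Nat.zero_le b
      _ ≤ 4 ^ m := two_mul_geomSum_four_le m
  have high : ∑ s ∈ Ico (m - b) m, min (4 ^ (s + b)) (4 ^ m) ≤ b * 4 ^ m := by
    calc ∑ s ∈ Ico (m - b) m, min (4 ^ (s + b)) (4 ^ m)
        ≤ #(Ico (m - b) m) • 4 ^ m := sum_le_card_nsmul _ _ _ fun s _ => min_le_right _ _
      _ ≤ b * 4 ^ m := by rw [Nat.card_Ico, smul_eq_mul]; exact Nat.mul_le_mul_right _ tsub_tsub_le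
  linarith

theorem restricted_dp_work_bound_general (m b : ℕ) :
    ∑ t ∈ Finset.Icc 1 m, (2 ^ m / 2 ^ t) * (2 * 2 ^ m / 2 ^ t) * min ((2 ^ b) ^ 2) (4 ^ t)
      ≤ 2 * (2 ^ m) ^ 2 * b + (2 ^ m) ^ 2 := by
  calc ∑ t ∈ Icc 1 m, (2 ^ m / 2 ^ t) * (2 * 2 ^ m / 2 ^ t) * min ((2 ^ b) ^ 2) (4 ^ t)
      = 2 * ∑ s ∈ range m, min (4 ^ (s + b)) (4 ^ m) := by
        rw [sum_congr rfl fun t ht => level_work_eq b (mem_Icc.1 ht).2, ← mul_sum,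
          sum_Icc_one_comp_sub (fun s => min (4 ^ (s + b)) (4 ^ m))]
    _ ≤ 2 * b * 4 ^ m + 4 ^ m := two_mul_sum_range_min_pow_four_le m b
    _ = 2 * (2 ^ m) ^ 2 * b + (2 ^ m) ^ 2 := by rw [sq_two_pow]; ring

/-- with `n = 2^m`, `B = 2^b`, `1 ≤ b ≤ m`, the level-by-level work of the
improved restricted-wavelet dynamic program satisfies
`∑_{t=1}^{m} (n/2^t)·(2n/2^t)·min(B², 4^t) ≤ 2·n²·log₂ B + n²`. -/
theorem restricted_dp_work_bound (m b : ℕ) (hb : 1 ≤ b) (hbm : b ≤ m) :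
    ∑ t ∈ Finset.Icc 1 m, (2 ^ m / 2 ^ t) * (2 * 2 ^ m / 2 ^ t) * min ((2 ^ b) ^ 2) (4 ^ t)
      ≤ 2 * (2 ^ m) ^ 2 * b + (2 ^ m) ^ 2 :=
  restricted_dp_work_bound_general m b
end

section
/- Let m ≥ b ≥ 1 be integers, n = 2^m and B = 2^b. Then ∑_{t=1}^{m} (n/2^t) · (2n/2^t) · min(B·log₂ B, t·2^t) ≤ 5·n². -/
/-!
Bounding the minimum by `t * 2 ^ t`, the `t`-th term becomes `2 ^ (m + 1) * (t * 2 ^ (m - t))`,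
and the arithmetico-geometric sum `∑ t * 2 ^ (m - t)` stays below `2 ^ (m + 1)`; so the total is
at most `4 n²`.
-/

open Finset

theorem sum_Icc_mul_two_pow_sub_add (m : ℕ) :
    ∑ t ∈ Icc 1 m, t * 2 ^ (m - t) + (m + 2) = 2 ^ (m + 1) := by
  induction m with
  | zero => simp
  | succ m ih =>
    have doubled : ∑ t ∈ Icc 1 m, t * 2 ^ (m + 1 - t) = 2 * ∑ t ∈ Icc 1 m, t * 2 ^ (m - t) := by
      rw [mul_sum]
      refine sum_congr rfl fun t ht => ?_
      rw [Nat.sub_add_comm (mem_Icc.mp ht).2, pow_succ]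
      ring
    rw [sum_Icc_succ_top (by omega), doubled, Nat.sub_self, pow_zero, pow_succ 2 (m + 1)]
    omega

theorem two_pow_div_mul_two_pow_div_mul_two_pow {m t : ℕ} (ht : t ≤ m) :
    2 ^ m / 2 ^ t * (2 * 2 ^ m / 2 ^ t) * 2 ^ t = 2 ^ (m + 1) * 2 ^ (m - t) := by
  rw [← pow_succ', Nat.pow_div ht two_pos, Nat.pow_div (by omega) two_pos,
    mul_assoc, ← pow_add, Nat.sub_add_cancel (by omega)]
  ring

theorem restricted_dp_linf_work_bound_general (m b : ℕ) :
    ∑ t ∈ Finset.Icc 1 m,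
        (2 ^ m / 2 ^ t) * (2 * 2 ^ m / 2 ^ t) * min (2 ^ b * b) (t * 2 ^ t)
      ≤ 5 * (2 ^ m) ^ 2 := by
  calc ∑ t ∈ Icc 1 m, (2 ^ m / 2 ^ t) * (2 * 2 ^ m / 2 ^ t) * min (2 ^ b * b) (t * 2 ^ t)
      ≤ ∑ t ∈ Icc 1 m, 2 ^ (m + 1) * (t * 2 ^ (m - t)) := by
        refine sum_le_sum fun t ht => ?_
        calc _ ≤ 2 ^ m / 2 ^ t * (2 * 2 ^ m / 2 ^ t) * (t * 2 ^ t) := by gcongr; exact min_le_right _ _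
          _ = 2 ^ (m + 1) * (t * 2 ^ (m - t)) := by
            rw [mul_left_comm, two_pow_div_mul_two_pow_div_mul_two_pow (mem_Icc.mp ht).2]
            ring
    _ = 2 ^ (m + 1) * ∑ t ∈ Icc 1 m, t * 2 ^ (m - t) := by rw [mul_sum]
    _ ≤ 2 ^ (m + 1) * 2 ^ (m + 1) := by
        have := sum_Icc_mul_two_pow_sub_add m
        gcongr
        omega
    _ ≤ 5 * (2 ^ m) ^ 2 := by rw [pow_succ]; nlinarith

/-- with `n = 2^m`, `B = 2^b`, `1 ≤ b ≤ m`, the level-by-level work of the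
`ℓ_∞` restricted-wavelet dynamic program satisfies
`∑_{t=1}^{m} (n/2^t)·(2n/2^t)·min(B·log₂ B, t·2^t) ≤ 5·n²`. -/
theorem restricted_dp_linf_work_bound (m b : ℕ) (hb : 1 ≤ b) (hbm : b ≤ m) :
    ∑ t ∈ Finset.Icc 1 m,
        (2 ^ m / 2 ^ t) * (2 * 2 ^ m / 2 ^ t) * min (2 ^ b * b) (t * 2 ^ t)
      ≤ 5 * (2 ^ m) ^ 2 :=
  restricted_dp_linf_work_bound_general m b
end
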